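/- Suppose ψ : ℝ^d → ℝ is differentiable and L-smooth with L > 0, and let (v^{s,q}) be the Markov chain coordinate descent iterates generated from an initial point v^{0,0} with step size η ∈ (0, 1/(LSQ)], block sequence k^0,…,k^{S−1}, and Q inner updates per block. Then for every s ∈ {0,…,S−1} and q ∈ {0,…,Q−1}, ‖∇_{k^s} ψ(v^{s,q}) − ∇_{k^s} ψ(v^{0,0})‖ ≤ C₁·‖∇ψ(v^{0,0})‖, where C₁ := η·e·L·S·Q and e is Euler's number. -/

import Mathlib

/-! Each inner step moves the iterate by at most `η ‖∇ψ‖`, so by `L`-smoothness the gradient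
drift `r_n := ‖∇ψ(v_n) − ∇ψ(v_0)‖` obeys `r_{n+1} ≤ r_n + ηL (‖∇ψ(v_0)‖ + r_n)`, whence
`r_n ≤ ((1 + ηL)^n − 1) ‖∇ψ(v_0)‖`. Along the `SQ` steps of the chain this is at most
`e^{ηLSQ} − 1 ≤ e · ηLSQ`, since `ηLSQ ≤ 1`. Masking to a block only shrinks the norm. -/

/-- For a block `k` (blocks given by the assignment `blk : Fin d → K` of coordinates
to blocks), the vector `∇̄_k ψ(v)` agreeing with the gradient of `ψ` at `v` on the
coordinates of block `k` and zero elsewhere.  Note `‖maskedGrad blk ψ v k‖ = ‖∇_k ψ(v)‖`. -/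
noncomputable def maskedGrad {d : ℕ} {K : Type*} [DecidableEq K]
    (blk : Fin d → K) (ψ : EuclideanSpace ℝ (Fin d) → ℝ)
    (v : EuclideanSpace ℝ (Fin d)) (k : K) : EuclideanSpace ℝ (Fin d) :=
  WithLp.toLp 2 (fun i => if blk i = k then gradient ψ v i else 0)

theorem EuclideanSpace.norm_le_norm_of_forall_abs_le {ι : Type*} [Fintype ι]
    {x y : EuclideanSpace ℝ ι} (h : ∀ i, |x i| ≤ |y i|) : ‖x‖ ≤ ‖y‖ := by
  rw [EuclideanSpace.norm_eq, EuclideanSpace.norm_eq]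
  gcongr with i
  simpa only [Real.norm_eq_abs] using h i

section maskedGrad

variable {d : ℕ} {K : Type*} [DecidableEq K] (blk : Fin d → K)
  (ψ : EuclideanSpace ℝ (Fin d) → ℝ) (k : K)

theorem norm_maskedGrad_le (u : EuclideanSpace ℝ (Fin d)) :
    ‖maskedGrad blk ψ u k‖ ≤ ‖gradient ψ u‖ := by
  refine EuclideanSpace.norm_le_norm_of_forall_abs_le fun i => ?_
  simp only [maskedGrad, WithLp.ofLp_toLp]
  split <;> simp

theorem norm_maskedGrad_sub_le (u w : EuclideanSpace ℝ (Fin d)) :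
    ‖maskedGrad blk ψ u k - maskedGrad blk ψ w k‖ ≤ ‖gradient ψ u - gradient ψ w‖ := by
  refine EuclideanSpace.norm_le_norm_of_forall_abs_le fun i => ?_
  simp only [maskedGrad, PiLp.sub_apply]
  split <;> simp

theorem norm_sub_maskedGrad_step_le {η : ℝ} (hη : 0 ≤ η) (u : EuclideanSpace ℝ (Fin d)) :
    ‖(u - η • maskedGrad blk ψ u k) - u‖ ≤ η * ‖gradient ψ u‖ := by
  rw [sub_sub_cancel_left, norm_neg, norm_smul, Real.norm_of_nonneg hη]
  exact mul_le_mul_of_nonneg_left (norm_maskedGrad_le blk ψ k u) hη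

end maskedGrad

theorem norm_map_sub_map_zero_le_of_norm_step_le {E F : Type*} [SeminormedAddCommGroup E]
    [SeminormedAddCommGroup F] {G : E → F} {L η : ℝ} (hL : 0 ≤ L) (hη : 0 ≤ η)
    (hG : ∀ x y, ‖G x - G y‖ ≤ L * ‖x - y‖) {x : ℕ → E} {N : ℕ}
    (hstep : ∀ n < N, ‖x (n + 1) - x n‖ ≤ η * ‖G (x n)‖) :
    ∀ n ≤ N, ‖G (x n) - G (x 0)‖ ≤ ((1 + η * L) ^ n - 1) * ‖G (x 0)‖ := by
  intro n hn
  induction n with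
  | zero => simp
  | succ n ih =>
    have hdrift := ih (by omega)
    have hGn : ‖G (x n)‖ ≤ ‖G (x 0)‖ + ‖G (x n) - G (x 0)‖ := norm_le_insert' _ _
    have hmove : ‖G (x (n + 1)) - G (x n)‖ ≤ L * (η * ‖G (x n)‖) :=
      (hG _ _).trans (mul_le_mul_of_nonneg_left (hstep n (by omega)) hL)
    calc ‖G (x (n + 1)) - G (x 0)‖
        ≤ ‖G (x (n + 1)) - G (x n)‖ + ‖G (x n) - G (x 0)‖ :=
          norm_sub_le_norm_sub_add_norm_sub _ _ _
      _ ≤ L * (η * (‖G (x 0)‖ + ((1 + η * L) ^ n - 1) * ‖G (x 0)‖))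
            + ((1 + η * L) ^ n - 1) * ‖G (x 0)‖ :=
          add_le_add (hmove.trans (by gcongr; linarith)) hdrift
      _ = ((1 + η * L) ^ (n + 1) - 1) * ‖G (x 0)‖ := by ring

theorem Real.exp_sub_one_le_mul_exp_one {x : ℝ} (hx₀ : 0 ≤ x) (hx₁ : x ≤ 1) :
    Real.exp x - 1 ≤ x * Real.exp 1 := by
  have h : Real.exp x * (1 - x) ≤ 1 := by
    calc Real.exp x * (1 - x) ≤ Real.exp x * Real.exp (-x) :=
          mul_le_mul_of_nonneg_left (Real.one_sub_le_exp_neg x) (Real.exp_pos x).le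
      _ = 1 := by rw [← Real.exp_add, add_neg_cancel, Real.exp_zero]
  nlinarith [Real.exp_le_exp.2 hx₁]

theorem one_add_pow_sub_one_le_mul_exp_one {a : ℝ} (ha : 0 ≤ a) {n N : ℕ} (hn : n ≤ N)
    (hNa : N * a ≤ 1) : (1 + a) ^ n - 1 ≤ N * a * Real.exp 1 :=
  calc (1 + a) ^ n - 1 ≤ (1 + a) ^ N - 1 := by gcongr; linarith
    _ ≤ Real.exp a ^ N - 1 := by
        gcongr
        linarith [Real.add_one_le_exp a]
    _ = Real.exp (N * a) - 1 := by rw [← Real.exp_nat_mul]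
    _ ≤ N * a * Real.exp 1 := Real.exp_sub_one_le_mul_exp_one (by positivity) hNa

section flatten

variable {α : Type*} {x : ℕ → ℕ → α} {S Q : ℕ}

theorem apply_div_mod_mul_add {s q : ℕ} (hq : q < Q) :
    x ((Q * s + q) / Q) ((Q * s + q) % Q) = x s q := by
  rw [Nat.mul_add_div (by omega), Nat.div_eq_of_lt hq, add_zero, Nat.mul_add_mod,
    Nat.mod_eq_of_lt hq]

theorem apply_div_mod_mul_add_succ (hrecs : ∀ s < S, x (s + 1) 0 = x s Q) {s q : ℕ}
    (hs : s < S) (hq : q < Q) :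
    x ((Q * s + q + 1) / Q) ((Q * s + q + 1) % Q) = x s (q + 1) := by
  rcases (Nat.succ_le_of_lt hq).lt_or_eq with hlt | hlast
  · exact apply_div_mod_mul_add hlt
  · subst hlast
    rw [← hrecs s hs, show (q + 1) * s + q + 1 = (q + 1) * (s + 1) + 0 by ring]
    exact apply_div_mod_mul_add (by omega)

end flatten

/-- Indexed by `n = Q s + q`, the iterates `v^{s,q}` form a single sequence of `S Q` steps. -/
theorem mccd_flat_norm_step_le {d : ℕ} {K : Type*} [DecidableEq K] (blk : Fin d → K)
    (ψ : EuclideanSpace ℝ (Fin d) → ℝ) {S Q : ℕ} {η : ℝ} (hη : 0 ≤ η) (kseq : ℕ → K)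
    {v : ℕ → ℕ → EuclideanSpace ℝ (Fin d)}
    (hrecq : ∀ s < S, ∀ q < Q, v s (q + 1) = v s q - η • maskedGrad blk ψ (v s q) (kseq s))
    (hrecs : ∀ s < S, v (s + 1) 0 = v s Q) :
    ∀ n < S * Q, ‖v ((n + 1) / Q) ((n + 1) % Q) - v (n / Q) (n % Q)‖
      ≤ η * ‖gradient ψ (v (n / Q) (n % Q))‖ := by
  intro n hn
  have hQ : 0 < Q := Nat.pos_of_mul_pos_left (Nat.zero_lt_of_lt hn)
  obtain ⟨s, q, hs, hq, rfl⟩ : ∃ s q, s < S ∧ q < Q ∧ n = Q * s + q :=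
    ⟨n / Q, n % Q, (Nat.div_lt_iff_lt_mul hQ).2 hn, Nat.mod_lt n hQ, (Nat.div_add_mod n Q).symm⟩
  rw [apply_div_mod_mul_add_succ hrecs hs hq, apply_div_mod_mul_add (x := v) hq, hrecq s hs q hq]
  exact norm_sub_maskedGrad_step_le blk ψ _ hη _

theorem mccd_surrogate_offset_bound_C1_general
    {d : ℕ} {K : Type*} [DecidableEq K]
    (blk : Fin d → K)
    (ψ : EuclideanSpace ℝ (Fin d) → ℝ) (L : ℝ) (hL : 0 < L)
    (hsmooth : ∀ x y : EuclideanSpace ℝ (Fin d),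
      ‖gradient ψ x - gradient ψ y‖ ≤ L * ‖x - y‖)
    (S Q : ℕ)
    (η : ℝ) (hη : 0 < η) (hηub : η ≤ 1 / (L * S * Q))
    (kseq : ℕ → K)
    (v : ℕ → ℕ → EuclideanSpace ℝ (Fin d))
    (hrecq : ∀ s < S, ∀ q < Q,
      v s (q + 1) = v s q - η • maskedGrad blk ψ (v s q) (kseq s))
    (hrecs : ∀ s < S, v (s + 1) 0 = v s Q)
    (C₁ : ℝ) (hC₁ : C₁ = η * Real.exp 1 * L * S * Q) :
    ∀ s < S, ∀ q < Q,
      ‖maskedGrad blk ψ (v s q) (kseq s) - maskedGrad blk ψ (v 0 0) (kseq s)‖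
        ≤ C₁ * ‖gradient ψ (v 0 0)‖ := by
  intro s hs q hq
  have hLSQ : 0 < L * S * Q := one_div_pos.mp (hη.trans_le hηub)
  have hSQ : ((S * Q : ℕ) : ℝ) * (η * L) ≤ 1 := by
    have := (le_div_iff₀ hLSQ).mp hηub
    push_cast
    linarith
  have hidx : Q * s + q ≤ S * Q := by
    have := Nat.mul_le_mul_left Q (Nat.succ_le_of_lt hs)
    rw [Nat.mul_succ, mul_comm Q S] at this
    omega
  have hdrift := norm_map_sub_map_zero_le_of_norm_step_le (x := fun n => v (n / Q) (n % Q))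
    hL.le hη.le hsmooth (mccd_flat_norm_step_le blk ψ hη.le kseq hrecq hrecs) (Q * s + q) hidx
  simp only [apply_div_mod_mul_add (x := v) hq, Nat.zero_div, Nat.zero_mod] at hdrift
  calc ‖maskedGrad blk ψ (v s q) (kseq s) - maskedGrad blk ψ (v 0 0) (kseq s)‖
      ≤ ‖gradient ψ (v s q) - gradient ψ (v 0 0)‖ := norm_maskedGrad_sub_le blk ψ _ _ _
    _ ≤ ((1 + η * L) ^ (Q * s + q) - 1) * ‖gradient ψ (v 0 0)‖ := hdrift
    _ ≤ C₁ * ‖gradient ψ (v 0 0)‖ := by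
        gcongr
        calc _ ≤ ((S * Q : ℕ) : ℝ) * (η * L) * Real.exp 1 :=
              one_add_pow_sub_one_le_mul_exp_one (by positivity) hidx hSQ
          _ = C₁ := by rw [hC₁]; push_cast; ring

/-- **Lemma 1 (surrogate offset bound).** For Markov chain coordinate descent iterates
`v^{s,q}` of an `L`-smooth differentiable `ψ` with step size `η ∈ (0, 1/(LSQ)]`,
for all `s < S` and `q < Q`,
`‖∇_{k^s} ψ(v^{s,q}) − ∇_{k^s} ψ(v^{0,0})‖ ≤ C₁ ‖∇ψ(v^{0,0})‖`, where `C₁ = η e L S Q`. -/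
theorem mccd_surrogate_offset_bound_C1
    {d : ℕ} (hd : 1 ≤ d) {K : Type*} [Fintype K] [DecidableEq K]
    (blk : Fin d → K)
    (ψ : EuclideanSpace ℝ (Fin d) → ℝ) (L : ℝ) (hL : 0 < L)
    (hdiff : Differentiable ℝ ψ)
    (hsmooth : ∀ x y : EuclideanSpace ℝ (Fin d),
      ‖gradient ψ x - gradient ψ y‖ ≤ L * ‖x - y‖)
    (S Q : ℕ) (hS : 1 ≤ S) (hQ : 1 ≤ Q)
    (η : ℝ) (hη : 0 < η) (hηub : η ≤ 1 / (L * S * Q))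
    (kseq : ℕ → K)
    (v : ℕ → ℕ → EuclideanSpace ℝ (Fin d))
    (hrecq : ∀ s < S, ∀ q < Q,
      v s (q + 1) = v s q - η • maskedGrad blk ψ (v s q) (kseq s))
    (hrecs : ∀ s < S, v (s + 1) 0 = v s Q)
    (C₁ : ℝ) (hC₁ : C₁ = η * Real.exp 1 * L * S * Q) :
    ∀ s < S, ∀ q < Q,
      ‖maskedGrad blk ψ (v s q) (kseq s) - maskedGrad blk ψ (v 0 0) (kseq s)‖
        ≤ C₁ * ‖gradient ψ (v 0 0)‖ :=
  mccd_surrogate_offset_bound_C1_general blk ψ L hL hsmooth S Q η hη hηub kseq v hrecq hrecs C₁ hC₁
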